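/- Let q ≥ 2 and let U be a unital in a projective plane Π of order q². Then the set U⊥ of tangent lines of U is a unital in the dual plane Π⊥: it consists of q³+1 points of Π⊥, and every line of Π⊥ meets U⊥ in exactly 1 or exactly q+1 points. -/
import Mathlib


/-- A finite projective plane: any two distinct points lie on a unique common line,
any two distinct lines meet in a unique common point, and there exist four points
no three of which are collinear. -/
structure ProjPlane where
  Point : Type
  Line : Type
  Incid : Point → Line → Prop
  finite_point : Finite Point
  finite_line : Finite Line
  exists_unique_line : ∀ p q : Point, p ≠ q → ∃! l : Line, Incid p l ∧ Incid q l
  exists_unique_point : ∀ l m : Line, l ≠ m → ∃! p : Point, Incid p l ∧ Incid p m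
  nondegenerate : ∃ f : Fin 4 → Point, Function.Injective f ∧
    ∀ l : Line, ∀ i j k : Fin 4, i ≠ j → i ≠ k → j ≠ k →
      ¬(Incid (f i) l ∧ Incid (f j) l ∧ Incid (f k) l)

/-- The plane has order `n`: every line contains exactly `n + 1` points. -/
def ProjPlane.HasOrder (Pl : ProjPlane) (n : ℕ) : Prop :=
  ∀ l : Pl.Line, {p : Pl.Point | Pl.Incid p l}.ncard = n + 1

/-- A unital in a plane of order `q ^ 2`: a set of `q ^ 3 + 1` points meeting every
line in exactly `1` or exactly `q + 1` points. -/
def ProjPlane.IsUnital (Pl : ProjPlane) (q : ℕ) (U : Set Pl.Point) : Prop :=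
  U.ncard = q ^ 3 + 1 ∧
    ∀ l : Pl.Line,
      (U ∩ {p | Pl.Incid p l}).ncard = 1 ∨ (U ∩ {p | Pl.Incid p l}).ncard = q + 1

namespace DUX

attribute [local instance] Classical.propDecidable

variable {Pl : ProjPlane}

noncomputable def join (p r : Pl.Point) (h : p ≠ r) : Pl.Line :=
  (Pl.exists_unique_line p r h).exists.choose

lemma join_left (p r : Pl.Point) (h : p ≠ r) : Pl.Incid p (join p r h) :=
  (Pl.exists_unique_line p r h).exists.choose_spec.1

lemma join_right (p r : Pl.Point) (h : p ≠ r) : Pl.Incid r (join p r h) :=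
  (Pl.exists_unique_line p r h).exists.choose_spec.2

lemma join_unique {p r : Pl.Point} (h : p ≠ r) {l : Pl.Line}
    (h1 : Pl.Incid p l) (h2 : Pl.Incid r l) : l = join p r h :=
  (Pl.exists_unique_line p r h).unique ⟨h1, h2⟩
    ⟨join_left p r h, join_right p r h⟩

noncomputable def meet (l m : Pl.Line) (h : l ≠ m) : Pl.Point :=
  (Pl.exists_unique_point l m h).exists.choose

lemma meet_left (l m : Pl.Line) (h : l ≠ m) : Pl.Incid (meet l m h) l :=
  (Pl.exists_unique_point l m h).exists.choose_spec.1

lemma meet_right (l m : Pl.Line) (h : l ≠ m) : Pl.Incid (meet l m h) m :=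
  (Pl.exists_unique_point l m h).exists.choose_spec.2

lemma meet_unique {l m : Pl.Line} (h : l ≠ m) {x : Pl.Point}
    (h1 : Pl.Incid x l) (h2 : Pl.Incid x m) : x = meet l m h :=
  (Pl.exists_unique_point l m h).unique ⟨h1, h2⟩ ⟨meet_left l m h, meet_right l m h⟩

instance : Nonempty Pl.Line := by
  obtain ⟨f, hinj, -⟩ := Pl.nondegenerate
  exact ⟨join (f 0) (f 1) (fun e => by simpa using hinj e)⟩

lemma exists_not_incid (p : Pl.Point) : ∃ l : Pl.Line, ¬ Pl.Incid p l := by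
  obtain ⟨f, hinj, hf⟩ := Pl.nondegenerate
  have ne : ∀ i j : Fin 4, i ≠ j → f i ≠ f j := fun i j hij e => hij (hinj e)
  by_contra hcon
  push_neg at hcon
  set L01 := join (f 0) (f 1) (ne 0 1 (by decide)) with hL01
  set L02 := join (f 0) (f 2) (ne 0 2 (by decide)) with hL02
  set L23 := join (f 2) (f 3) (ne 2 3 (by decide)) with hL23
  by_cases hp0 : p = f 0
  · exact hf L23 0 2 3 (by decide) (by decide) (by decide)
      ⟨hp0 ▸ hcon L23, join_left _ _ _, join_right _ _ _⟩
  · have e1 : L01 = join p (f 0) hp0 := join_unique hp0 (hcon L01) (join_left _ _ _)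
    have e2 : L02 = join p (f 0) hp0 := join_unique hp0 (hcon L02) (join_left _ _ _)
    exact hf L01 0 1 2 (by decide) (by decide) (by decide)
      ⟨join_left _ _ _, join_right _ _ _, by rw [e1, ← e2]; exact join_right _ _ _⟩

lemma ncard_lines_through {q : ℕ} (horder : Pl.HasOrder (q ^ 2)) (p : Pl.Point) :
    {l : Pl.Line | Pl.Incid p l}.ncard = q ^ 2 + 1 := by
  obtain ⟨l₀, hl₀⟩ := exists_not_incid p
  set A := {l : Pl.Line | Pl.Incid p l} with hA
  have hne : ∀ m ∈ A, m ≠ l₀ := fun m hm e => hl₀ (e ▸ hm)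
  set F : Pl.Line → Pl.Point := fun m => if h : m = l₀ then p else meet m l₀ h with hF
  have hFval : ∀ m (hm : m ≠ l₀), F m = meet m l₀ hm := fun m hm => dif_neg hm
  have hinj : Set.InjOn F A := by
    intro m hm m' hm' he
    have h1 := hFval m (hne m hm); have h2 := hFval m' (hne m' hm')
    have hx1 : Pl.Incid (F m) m := by rw [h1]; exact meet_left _ _ _
    have hx1' : Pl.Incid (F m) m' := by rw [he, h2]; exact meet_left _ _ _
    have hxl : Pl.Incid (F m) l₀ := by rw [h1]; exact meet_right _ _ _
    have hxp : F m ≠ p := fun e => hl₀ (e ▸ hxl)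
    have hm'2 : Pl.Incid p m' := hm'
    rw [join_unique hxp hx1 hm, join_unique hxp hx1' hm'2]
  have himg : F '' A = {x | Pl.Incid x l₀} := by
    ext x
    constructor
    · rintro ⟨m, hm, rfl⟩
      rw [hFval m (hne m hm)]; exact meet_right _ _ _
    · intro hx
      have hxp : x ≠ p := fun e => hl₀ (e ▸ hx)
      have hm : Pl.Incid p (join x p hxp) := join_right _ _ _
      have hml : join x p hxp ≠ l₀ := fun e => hl₀ (e ▸ hm)
      exact ⟨join x p hxp, hm, by
        rw [hFval _ hml]
        exact (meet_unique hml (join_left x p hxp) hx).symm⟩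
  have := Set.ncard_image_of_injOn hinj
  rw [himg] at this
  rw [← this, horder l₀]


noncomputable local instance : Fintype Pl.Point := @Fintype.ofFinite _ Pl.finite_point
noncomputable local instance : Fintype Pl.Line := @Fintype.ofFinite _ Pl.finite_line

open Finset in
lemma tangents_through {q : ℕ} (hq : 2 ≤ q) (horder : Pl.HasOrder (q ^ 2))
    {U : Set Pl.Point} (hU : Pl.IsUnital q U) (p : Pl.Point) :
    ({l : Pl.Line | (U ∩ {x | Pl.Incid x l}).ncard = 1} ∩ {l | Pl.Incid p l}).ncard
      = if p ∈ U then 1 else q + 1 := by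
  obtain ⟨hcard, hsec⟩ := hU
  set t : Finset Pl.Line := univ.filter (fun l => Pl.Incid p l) with ht
  have htc : t.card = q ^ 2 + 1 := by
    have h1 := ncard_lines_through horder p
    have h2 : {l : Pl.Line | Pl.Incid p l} = ↑t := by ext l; simp [ht]
    rwa [h2, Set.ncard_coe_finset] at h1
  set sU : Finset Pl.Point := U.toFinset with hsU
  have hsUc : sU.card = q ^ 3 + 1 := by
    rw [hsU, ← Set.ncard_eq_toFinset_card']; exact hcard
  set s : Finset Pl.Point := sU.erase p with hs
  set F : Pl.Point → Pl.Line := fun x => if h : x = p then Classical.arbitrary _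
    else join x p h with hF
  have hmem : ∀ x ∈ s, F x ∈ t := by
    intro x hx
    have hxp : x ≠ p := (Finset.mem_erase.mp hx).1
    simp only [hF, dif_neg hxp, ht, mem_filter, mem_univ, true_and]
    exact join_right _ _ _
  have hfib : ∀ l ∈ t, s.filter (fun x => F x = l)
      = (sU.filter (fun x => Pl.Incid x l)).erase p := by
    intro l hl
    have hpl : Pl.Incid p l := by simpa [ht] using hl
    ext x
    simp only [mem_filter, mem_erase, hs]
    constructor
    · rintro ⟨⟨hxp, hxU⟩, hFx⟩
      refine ⟨hxp, hxU, ?_⟩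
      rw [hF] at hFx; simp only [dif_neg hxp] at hFx
      rw [← hFx]; exact join_left _ _ _
    · rintro ⟨hxp, hxU, hxl⟩
      refine ⟨⟨hxp, hxU⟩, ?_⟩
      rw [hF]; simp only [dif_neg hxp]
      exact (join_unique hxp hxl hpl).symm
  have hfibcard : ∀ l : Pl.Line, (sU.filter (fun x => Pl.Incid x l)).card
      = (U ∩ {x | Pl.Incid x l}).ncard := by
    intro l
    have he : (U ∩ {x | Pl.Incid x l}).toFinset = sU.filter (fun x => Pl.Incid x l) := by
      ext x; simp [hsU]
    rw [Set.ncard_eq_toFinset_card', he]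
  have hcount := Finset.card_eq_sum_card_fiberwise hmem
  set T : Finset Pl.Line := t.filter (fun l => (U ∩ {x | Pl.Incid x l}).ncard = 1) with hT
  have hTsub : T ⊆ t := filter_subset _ _
  have hTle : T.card ≤ q ^ 2 + 1 := le_trans (card_le_card hTsub) (le_of_eq htc)
  have hTeq : ({l : Pl.Line | (U ∩ {x | Pl.Incid x l}).ncard = 1} ∩ {l | Pl.Incid p l}).ncard
      = T.card := by
    have hst : ({l : Pl.Line | (U ∩ {x | Pl.Incid x l}).ncard = 1} ∩ {l | Pl.Incid p l})
        = ↑T := by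
      ext l
      simp only [Set.mem_inter_iff, Set.mem_setOf_eq, Finset.mem_coe, hT, mem_filter,
        ht, mem_univ, true_and]
      tauto
    rw [hst, Set.ncard_coe_finset]
  have hnq : ∀ l ∈ t \ T, (U ∩ {x | Pl.Incid x l}).ncard = q + 1 := by
    intro l hl
    rcases hsec l with h | h
    · exact absurd (by rw [hT, mem_filter]; exact ⟨(mem_sdiff.mp hl).1, h⟩ : l ∈ T)
        (mem_sdiff.mp hl).2
    · exact h
  have hsdiff : t \ T = t.filter (fun l => ¬ (U ∩ {x | Pl.Incid x l}).ncard = 1) := by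
    rw [hT, Finset.filter_not]
  rw [hTeq]
  by_cases hpU : p ∈ U
  · have hps : p ∈ sU := by simp [hsU, hpU]
    have hsc : s.card = q ^ 3 := by rw [hs, card_erase_of_mem hps, hsUc]; omega
    have hfc : ∀ l ∈ t, (s.filter (fun x => F x = l)).card
        = (U ∩ {x | Pl.Incid x l}).ncard - 1 := by
      intro l hl
      have hpl : Pl.Incid p l := by simpa [ht] using hl
      rw [hfib l hl, card_erase_of_mem (by simp [hsU, hpU, hpl]), hfibcard l]
    have hsum : q ^ 3 = ∑ l ∈ t, ((U ∩ {x | Pl.Incid x l}).ncard - 1) := by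
      rw [← hsc, hcount]; exact Finset.sum_congr rfl hfc
    have hsplit : ∑ l ∈ t, ((U ∩ {x | Pl.Incid x l}).ncard - 1)
        = ∑ l ∈ T, ((U ∩ {x | Pl.Incid x l}).ncard - 1)
          + ∑ l ∈ t \ T, ((U ∩ {x | Pl.Incid x l}).ncard - 1) := by
      rw [hsdiff, hT]
      exact (Finset.sum_filter_add_sum_filter_not t _ _).symm
    have hT0 : ∑ l ∈ T, ((U ∩ {x | Pl.Incid x l}).ncard - 1) = 0 := by
      apply Finset.sum_eq_zero; intro l hl
      rw [hT, mem_filter] at hl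
      omega
    have hTq : ∑ l ∈ t \ T, ((U ∩ {x | Pl.Incid x l}).ncard - 1)
        = (t.card - T.card) * q := by
      rw [Finset.sum_congr rfl
          (fun l hl => (by rw [hnq l hl]; omega :
            (U ∩ {x | Pl.Incid x l}).ncard - 1 = q)),
        Finset.sum_const, card_sdiff_of_subset hTsub, smul_eq_mul]
    have key : q ^ 3 = (q ^ 2 + 1 - T.card) * q := by
      rw [hsum, hsplit, hT0, hTq, htc, Nat.zero_add]
    have h2 : (q ^ 2 + 1 - T.card) * q = q ^ 2 * q := by
      rw [← key]; ring
    have h3 : q ^ 2 + 1 - T.card = q ^ 2 :=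
      Nat.eq_of_mul_eq_mul_right (by omega) h2
    simp only [if_pos hpU]
    omega
  · have hps : p ∉ sU := by simp [hsU, hpU]
    have hsc : s.card = q ^ 3 + 1 := by rw [hs, Finset.erase_eq_of_notMem hps, hsUc]
    have hfc : ∀ l ∈ t, (s.filter (fun x => F x = l)).card
        = (U ∩ {x | Pl.Incid x l}).ncard := by
      intro l hl
      rw [hfib l hl, Finset.erase_eq_of_notMem (by simp [hsU, hpU]), hfibcard l]
    have hsum : q ^ 3 + 1 = ∑ l ∈ t, (U ∩ {x | Pl.Incid x l}).ncard := by
      rw [← hsc, hcount]; exact Finset.sum_congr rfl hfc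
    have hsplit : ∑ l ∈ t, (U ∩ {x | Pl.Incid x l}).ncard
        = ∑ l ∈ T, (U ∩ {x | Pl.Incid x l}).ncard
          + ∑ l ∈ t \ T, (U ∩ {x | Pl.Incid x l}).ncard := by
      rw [hsdiff, hT]
      exact (Finset.sum_filter_add_sum_filter_not t _ _).symm
    have hT1 : ∑ l ∈ T, (U ∩ {x | Pl.Incid x l}).ncard = T.card := by
      rw [Finset.sum_congr rfl (fun l hl => (mem_filter.mp hl).2), Finset.sum_const,
        smul_eq_mul, mul_one]
    set b := t.card - T.card with hb
    have hTq : ∑ l ∈ t \ T, (U ∩ {x | Pl.Incid x l}).ncard = b * (q + 1) := by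
      rw [Finset.sum_congr rfl hnq, Finset.sum_const, card_sdiff_of_subset hTsub, smul_eq_mul]
    have hab : T.card + b = q ^ 2 + 1 := by
      rw [hb]; have := card_le_card hTsub; omega
    have key : q ^ 3 + 1 = T.card + (b * q + b) := by
      rw [hsum, hsplit, hT1, hTq]; ring
    set c := q ^ 2 - q with hc
    have hcq : c + q = q ^ 2 := by
      have : q ≤ q ^ 2 := by nlinarith
      omega
    have hcc : c * q + q ^ 2 = q ^ 3 := by
      calc c * q + q ^ 2 = (c + q) * q := by ring
        _ = q ^ 2 * q := by rw [hcq]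
        _ = q ^ 3 := by ring
    have hbq : b * q + q ^ 2 = q ^ 3 := by omega
    have hbc : b = c := Nat.eq_of_mul_eq_mul_right (show 0 < q by omega) (by omega)
    simp only [if_neg hpU]
    omega


instance : Nonempty Pl.Point := by
  obtain ⟨f, -, -⟩ := Pl.nondegenerate
  exact ⟨f 0⟩

lemma tangent_total {q : ℕ} (hq : 2 ≤ q) (horder : Pl.HasOrder (q ^ 2))
    {U : Set Pl.Point} (hU : Pl.IsUnital q U) :
    {l : Pl.Line | (U ∩ {x | Pl.Incid x l}).ncard = 1}.ncard = q ^ 3 + 1 := by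
  set T := {l : Pl.Line | (U ∩ {x | Pl.Incid x l}).ncard = 1} with hT
  set g : Pl.Line → Pl.Point := fun l =>
    if h : (U ∩ {x | Pl.Incid x l}).ncard = 1 then (Set.ncard_eq_one.mp h).choose
    else Classical.arbitrary _ with hg
  have hgl : ∀ l ∈ T, U ∩ {x | Pl.Incid x l} = {g l} := by
    intro l hl
    have h : (U ∩ {x | Pl.Incid x l}).ncard = 1 := hl
    rw [hg]; simp only [dif_pos h]
    exact (Set.ncard_eq_one.mp h).choose_spec
  have hgU : ∀ l ∈ T, g l ∈ U ∧ Pl.Incid (g l) l := by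
    intro l hl
    have := hgl l hl
    have hx : g l ∈ U ∩ {x | Pl.Incid x l} := by rw [this]; rfl
    exact ⟨hx.1, hx.2⟩
  have hthru : ∀ x ∈ U, (T ∩ {m | Pl.Incid x m}).ncard = 1 := by
    intro x hx
    have := tangents_through hq horder hU x
    rwa [if_pos hx] at this
  have hinj : Set.InjOn g T := by
    intro l hl l' hl' he
    obtain ⟨m, hm⟩ := Set.ncard_eq_one.mp (hthru (g l) (hgU l hl).1)
    have h1 : l ∈ T ∩ {m | Pl.Incid (g l) m} := ⟨hl, (hgU l hl).2⟩
    have h2 : l' ∈ T ∩ {m | Pl.Incid (g l) m} := ⟨hl', he ▸ (hgU l' hl').2⟩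
    rw [hm] at h1 h2
    rw [h1, h2]
  have himg : g '' T = U := by
    apply Set.Subset.antisymm
    · rintro _ ⟨l, hl, rfl⟩; exact (hgU l hl).1
    · intro x hx
      obtain ⟨m, hm⟩ := Set.ncard_eq_one.mp (hthru x hx)
      have hmem : m ∈ T ∩ {m | Pl.Incid x m} := by rw [hm]; rfl
      have hxm : x ∈ U ∩ {y | Pl.Incid y m} := ⟨hx, hmem.2⟩
      rw [hgl m hmem.1] at hxm
      exact ⟨m, hmem.1, hxm.symm⟩
  have := Set.ncard_image_of_injOn hinj
  rw [himg] at this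
  rw [← this]; exact hU.1

end DUX

/-- The set of tangent lines of a unital is a unital in the dual plane: it consists of
`q ^ 3 + 1` lines (points of the dual plane), and for every point `p` of the plane
(line of the dual plane), the pencil of lines through `p` contains exactly `1` or
exactly `q + 1` tangent lines. -/
theorem unital_dual_is_unital (Pl : ProjPlane) (q : ℕ) (hq : 2 ≤ q)
    (horder : Pl.HasOrder (q ^ 2)) (U : Set Pl.Point) (hU : Pl.IsUnital q U) :
    {l : Pl.Line | (U ∩ {x | Pl.Incid x l}).ncard = 1}.ncard = q ^ 3 + 1 ∧
    ∀ p : Pl.Point,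
      ({l : Pl.Line | (U ∩ {x | Pl.Incid x l}).ncard = 1} ∩ {l | Pl.Incid p l}).ncard = 1 ∨
      ({l : Pl.Line | (U ∩ {x | Pl.Incid x l}).ncard = 1} ∩ {l | Pl.Incid p l}).ncard = q + 1 := by

  refine ⟨DUX.tangent_total hq horder hU, fun p => ?_⟩
  have := DUX.tangents_through hq horder hU p
  by_cases hpU : p ∈ U
  · left; rwa [if_pos hpU] at this
  · right; rwa [if_neg hpU] at this
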